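/- arXiv:1910.06259 — 5 statements merged into one kernel-verified Lean document; each statement's English description precedes it below -/
import Mathlib

section
/- Fix p0 ∈ (0,1) and let L₁(a,b) = p0·max(s(a), s(b)) + (1−p0)·max(s(−a), s(−b)) for (a,b) ∈ ℝ². Let a₀ = log((1−p0)/p0). Then (a₀, a₀) is a global minimizer of L₁ on ℝ², and it is the unique global minimizer: every (a,b) with (a,b) ≠ (a₀,a₀) satisfies L₁(a,b) > L₁(a₀,a₀). -/
noncomputable def s (x : ℝ) : ℝ := Real.log (1 + Real.exp x)

noncomputable def L₁ (p0 a b : ℝ) : ℝ :=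
  p0 * max (s a) (s b) + (1 - p0) * max (s (-a)) (s (-b))

lemma s_a0 (p0 : ℝ) (hp0 : 0 < p0) (hp1 : p0 < 1) :
    s (Real.log ((1 - p0) / p0)) = -Real.log p0 := by
  have hq : 0 < 1 - p0 := by linarith
  have hqp : 0 < (1 - p0) / p0 := div_pos hq hp0
  unfold s
  rw [Real.exp_log hqp]
  have : 1 + (1 - p0) / p0 = p0⁻¹ := by field_simp; ring
  rw [this, Real.log_inv]

lemma s_neg_a0 (p0 : ℝ) (hp0 : 0 < p0) (hp1 : p0 < 1) :
    s (-Real.log ((1 - p0) / p0)) = -Real.log (1 - p0) := by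
  have hq : 0 < 1 - p0 := by linarith
  have hqp : 0 < (1 - p0) / p0 := div_pos hq hp0
  unfold s
  rw [Real.exp_neg, Real.exp_log hqp]
  have : 1 + ((1 - p0) / p0)⁻¹ = (1 - p0)⁻¹ := by
    rw [inv_div]; field_simp; ring
  rw [this, Real.log_inv]

lemma key_strict (p0 : ℝ) (hp0 : 0 < p0) (hp1 : p0 < 1) (a : ℝ)
    (ha : a ≠ Real.log ((1 - p0) / p0)) :
    p0 * s (Real.log ((1 - p0) / p0)) + (1 - p0) * s (-Real.log ((1 - p0) / p0))
      < p0 * s a + (1 - p0) * s (-a) := by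
  have hq : 0 < 1 - p0 := by linarith
  set t := Real.exp a with htdef
  have ht : 0 < t := Real.exp_pos a
  have ht1 : 0 < 1 + t := by linarith
  -- s a and s (-a) in terms of t
  have hsa : s a = Real.log (1 + t) := rfl
  have hsna : s (-a) = Real.log (1 + t) - Real.log t := by
    unfold s
    rw [Real.exp_neg]
    have h1 : 1 + t⁻¹ = (1 + t) / t := by field_simp; ring
    rw [← htdef, h1, Real.log_div (by positivity) (ne_of_gt ht)]
  -- x and y
  set x := p0 * (1 + t) with hxdef
  set y := (1 - p0) * (1 + t) / t with hydef
  have hx : 0 < x := by positivity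
  have hy : 0 < y := by positivity
  have hx1 : x ≠ 1 := by
    intro h
    apply ha
    have htv : t = (1 - p0) / p0 := by
      field_simp at h ⊢; linarith
    rw [← Real.log_exp a, ← htdef, htv]
  -- log bounds
  have hlx : 1 - x⁻¹ < Real.log x := by
    have hxi : x⁻¹ ≠ 1 := by
      intro h
      apply hx1
      rw [← inv_inv x, h, inv_one]
    have h := Real.log_lt_sub_one_of_pos (inv_pos.mpr hx) hxi
    rw [Real.log_inv] at h
    linarith
  have hly : 1 - y⁻¹ ≤ Real.log y := by
    have h := Real.log_le_sub_one_of_pos (inv_pos.mpr hy)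
    rw [Real.log_inv] at h
    linarith
  -- expand logs
  have hlogx : Real.log x = Real.log p0 + Real.log (1 + t) :=
    Real.log_mul (ne_of_gt hp0) (ne_of_gt ht1)
  have hlogy : Real.log y = Real.log (1 - p0) + Real.log (1 + t) - Real.log t := by
    rw [hydef, Real.log_div (by positivity) (ne_of_gt ht),
      Real.log_mul (ne_of_gt hq) (ne_of_gt ht1)]
  -- sum of inverses identity
  have hsum : p0 * x⁻¹ + (1 - p0) * y⁻¹ = 1 := by
    rw [hxdef, hydef]
    field_simp
  have hcomb : 0 < p0 * Real.log x + (1 - p0) * Real.log y := by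
    have h1 := mul_lt_mul_of_pos_left hlx hp0
    have h2 := mul_le_mul_of_nonneg_left hly hq.le
    nlinarith [h1, h2, hsum]
  rw [s_a0 p0 hp0 hp1, s_neg_a0 p0 hp0 hp1, hsa, hsna]
  rw [hlogx, hlogy] at hcomb
  nlinarith [hcomb]

lemma key_le (p0 : ℝ) (hp0 : 0 < p0) (hp1 : p0 < 1) (a : ℝ) :
    p0 * s (Real.log ((1 - p0) / p0)) + (1 - p0) * s (-Real.log ((1 - p0) / p0))
      ≤ p0 * s a + (1 - p0) * s (-a) := by
  by_cases ha : a = Real.log ((1 - p0) / p0)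
  · rw [ha]
  · exact (key_strict p0 hp0 hp1 a ha).le

theorem L1_unique_global_min (p0 : ℝ) (hp0 : 0 < p0) (hp1 : p0 < 1) :
    (∀ a b : ℝ,
      L₁ p0 (Real.log ((1 - p0) / p0)) (Real.log ((1 - p0) / p0)) ≤ L₁ p0 a b) ∧
    (∀ a b : ℝ, (a, b) ≠ (Real.log ((1 - p0) / p0), Real.log ((1 - p0) / p0)) →
      L₁ p0 (Real.log ((1 - p0) / p0)) (Real.log ((1 - p0) / p0)) < L₁ p0 a b) := by
  have hq : 0 < 1 - p0 := by linarith
  set a₀ := Real.log ((1 - p0) / p0) with ha0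
  have hL0 : L₁ p0 a₀ a₀ = p0 * s a₀ + (1 - p0) * s (-a₀) := by
    unfold L₁; rw [max_self, max_self]
  constructor
  · intro a b
    have h1 : p0 * s a ≤ p0 * max (s a) (s b) :=
      mul_le_mul_of_nonneg_left (le_max_left _ _) hp0.le
    have h2 : (1 - p0) * s (-a) ≤ (1 - p0) * max (s (-a)) (s (-b)) :=
      mul_le_mul_of_nonneg_left (le_max_left _ _) hq.le
    have h3 := key_le p0 hp0 hp1 a
    unfold L₁
    rw [max_self, max_self]
    linarith
  · intro a b hne
    by_cases haeq : a = a₀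
    · have hbne : b ≠ a₀ := by
        intro hb; exact hne (by rw [haeq, hb])
      have h1 : p0 * s b ≤ p0 * max (s a) (s b) :=
        mul_le_mul_of_nonneg_left (le_max_right _ _) hp0.le
      have h2 : (1 - p0) * s (-b) ≤ (1 - p0) * max (s (-a)) (s (-b)) :=
        mul_le_mul_of_nonneg_left (le_max_right _ _) hq.le
      have h3 := key_strict p0 hp0 hp1 b hbne
      unfold L₁
      rw [max_self, max_self]
      linarith
    · have h1 : p0 * s a ≤ p0 * max (s a) (s b) :=
        mul_le_mul_of_nonneg_left (le_max_left _ _) hp0.le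
      have h2 : (1 - p0) * s (-a) ≤ (1 - p0) * max (s (-a)) (s (-b)) :=
        mul_le_mul_of_nonneg_left (le_max_left _ _) hq.le
      have h3 := key_strict p0 hp0 hp1 a haeq
      unfold L₁
      rw [max_self, max_self]
      linarith
end

section
/- Fix p0 ∈ (0,1) and let L₁(a,b) = p0·max(s(a), s(b)) + (1−p0)·max(s(−a), s(−b)). Then the infimum of L₁ over ℝ² equals the binary entropy −p0·log(p0) − (1−p0)·log(1−p0), attained at a = b = log((1−p0)/p0). -/
/-!
Every logit is `a = log ((1 - q) / q)` for some `q ∈ (0, 1)`, and then `s a = -log q` and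
`s (-a) = -log (1 - q)`. Hence `L₁ p a b ≥ L₁ p a a = -p log q - (1 - p) log (1 - q)`, a binary
cross entropy, which by Gibbs' inequality is at least the entropy `binEntropy p`, with equality
at `q = p`.
-/

open Real Set

lemma Real.binEntropy_eq_neg_mul_log_sub_mul_log (p : ℝ) :
    binEntropy p = -p * log p - (1 - p) * log (1 - p) := by
  simp only [binEntropy, log_inv]
  ring

lemma Real.mul_sub_log_le_sub {p q : ℝ} (hp : 0 ≤ p) (hq : 0 < q) :
    p * (log q - log p) ≤ q - p := by
  rcases hp.eq_or_lt with rfl | hp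
  · simpa using hq.le
  calc p * (log q - log p) = p * log (q / p) := by rw [log_div hq.ne' hp.ne']
    _ ≤ p * (q / p - 1) := mul_le_mul_of_nonneg_left (log_le_sub_one_of_pos (by positivity)) hp.le
    _ = q - p := by field_simp

lemma Real.binEntropy_le_cross_entropy {p q : ℝ} (hp₀ : 0 ≤ p) (hp₁ : p ≤ 1)
    (hq₀ : 0 < q) (hq₁ : q < 1) :
    binEntropy p ≤ -p * log q - (1 - p) * log (1 - q) := by
  have hp := mul_sub_log_le_sub hp₀ hq₀
  have hp' := mul_sub_log_le_sub (sub_nonneg.mpr hp₁) (sub_pos.mpr hq₁)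
  rw [binEntropy_eq_neg_mul_log_sub_mul_log]
  linarith

lemma exists_eq_log_one_sub_div (a : ℝ) : ∃ q ∈ Ioo (0 : ℝ) 1, a = log ((1 - q) / q) := by
  refine ⟨(1 + exp a)⁻¹, ⟨by positivity, inv_lt_one_of_one_lt₀ (by linarith [exp_pos a])⟩, ?_⟩
  have hq : 1 - (1 + exp a)⁻¹ = exp a * (1 + exp a)⁻¹ := by
    field_simp
    ring
  rw [hq, mul_div_cancel_right₀ _ (by positivity), log_exp]

lemma s_log_one_sub_div {q : ℝ} (hq₀ : 0 < q) (hq₁ : q < 1) : s (log ((1 - q) / q)) = -log q := by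
  have h : 1 + (1 - q) / q = q⁻¹ := by
    field_simp
    ring
  rw [s, exp_log (div_pos (sub_pos.mpr hq₁) hq₀), h, log_inv]

lemma s_neg_log_one_sub_div {q : ℝ} (hq₀ : 0 < q) (hq₁ : q < 1) :
    s (-log ((1 - q) / q)) = -log (1 - q) := by
  have h : -log ((1 - q) / q) = log ((1 - (1 - q)) / (1 - q)) := by
    rw [← log_inv, inv_div, sub_sub_cancel]
  rw [h, s_log_one_sub_div (sub_pos.mpr hq₁) (by linarith)]

lemma L₁_self (p a : ℝ) : L₁ p a a = p * s a + (1 - p) * s (-a) := by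
  simp only [L₁, max_self]

lemma L₁_self_le {p : ℝ} (hp₀ : 0 ≤ p) (hp₁ : p ≤ 1) (a b : ℝ) : L₁ p a a ≤ L₁ p a b := by
  rw [L₁_self, L₁]
  gcongr <;> exact le_max_left _ _

lemma L₁_log_one_sub_div (p : ℝ) {q : ℝ} (hq₀ : 0 < q) (hq₁ : q < 1) :
    L₁ p (log ((1 - q) / q)) (log ((1 - q) / q)) = -p * log q - (1 - p) * log (1 - q) := by
  rw [L₁_self, s_log_one_sub_div hq₀ hq₁, s_neg_log_one_sub_div hq₀ hq₁]
  ring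

theorem L1_inf_is_binary_entropy (p0 : ℝ) (hp0 : 0 < p0) (hp1 : p0 < 1) :
    L₁ p0 (Real.log ((1 - p0) / p0)) (Real.log ((1 - p0) / p0)) =
      -p0 * Real.log p0 - (1 - p0) * Real.log (1 - p0) ∧
    ∀ a b : ℝ,
      -p0 * Real.log p0 - (1 - p0) * Real.log (1 - p0) ≤ L₁ p0 a b := by
  refine ⟨L₁_log_one_sub_div p0 hp0 hp1, fun a b => ?_⟩
  obtain ⟨q, ⟨hq₀, hq₁⟩, rfl⟩ := exists_eq_log_one_sub_div a
  calc -p0 * log p0 - (1 - p0) * log (1 - p0) = binEntropy p0 :=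
        (binEntropy_eq_neg_mul_log_sub_mul_log p0).symm
    _ ≤ -p0 * log q - (1 - p0) * log (1 - q) :=
        binEntropy_le_cross_entropy hp0.le hp1.le hq₀ hq₁
    _ = L₁ p0 (log ((1 - q) / q)) (log ((1 - q) / q)) := (L₁_log_one_sub_div p0 hq₀ hq₁).symm
    _ ≤ L₁ p0 (log ((1 - q) / q)) b := L₁_self_le hp0.le hp1.le _ b
end

section
/- Fix p0 ∈ (0,1) with p0 ≠ 1/2, and let a₀ = log((1−p0)/p0). Then E(a₀, a₀) = min(p0, 1−p0), and min(p0, 1−p0) > 0. (In particular, the Bayes optimal classifier under 100% adversarial training, whose optimal logit differences are a = b = a₀, has classification error min(p0, 1−p0), strictly greater than the Bayes error 0.) -/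
/-! With both logit differences equal to `a₀ = log ((1 - p0) / p0)`, the classifier predicts the
same class at both points, so it errs on exactly one of them: on `x = 0` (mass `p0`) when
`a₀ > 0`, i.e. `p0 < 1/2`, and on `x = ε` (mass `1 - p0`) when `a₀ < 0`, i.e. `p0 > 1/2`.
Either way the error is the smaller of the two masses. -/

noncomputable def E (p0 a b : ℝ) : ℝ :=
  p0 * (if a ≥ 0 then 1 else 0) + (1 - p0) * (if b ≤ 0 then 1 else 0)

lemma E_diag_of_pos {p0 a : ℝ} (ha : 0 < a) : E p0 a a = p0 := by
  simp [E, ha.le, not_le.2 ha]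

lemma E_diag_of_neg {p0 a : ℝ} (ha : a < 0) : E p0 a a = 1 - p0 := by
  simp [E, ha.le, not_le.2 ha]

lemma log_one_sub_div_self_pos {p : ℝ} (hp : 0 < p) (h : p < 1 / 2) :
    0 < Real.log ((1 - p) / p) :=
  Real.log_pos ((one_lt_div hp).2 (by linarith))

lemma log_one_sub_div_self_neg {p : ℝ} (h : 1 / 2 < p) (hp : p < 1) :
    Real.log ((1 - p) / p) < 0 :=
  Real.log_neg (div_pos (by linarith) (by linarith)) ((div_lt_one (by linarith)).2 (by linarith))

theorem at_error (p0 : ℝ) (hp0 : 0 < p0) (hp1 : p0 < 1) (hne : p0 ≠ 1 / 2) :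
    E p0 (Real.log ((1 - p0) / p0)) (Real.log ((1 - p0) / p0)) = min p0 (1 - p0) ∧
    0 < min p0 (1 - p0) := by
  refine ⟨?_, lt_min hp0 (sub_pos.2 hp1)⟩
  rcases hne.lt_or_gt with hlt | hgt
  · rw [E_diag_of_pos (log_one_sub_div_self_pos hp0 hlt), min_eq_left (by linarith)]
  · rw [E_diag_of_neg (log_one_sub_div_self_neg hgt hp1), min_eq_right (by linarith)]
end

section
/- Fix p0 ∈ (0,1) and define L₂(a,b) = p0·max(s(a), s(b)) + (1−p0)·max(s(−a), s(−b)) + p0·s(a) + (1−p0)·s(−b) for (a,b) ∈ ℝ². Let a₀ = log((1−p0)/p0). Then (a₀, a₀) is the unique global minimizer of L₂ on ℝ²: L₂(a,b) ≥ L₂(a₀,a₀) for all (a,b), with equality only for (a,b) = (a₀,a₀). Consequently, for p0 ≠ 1/2 the induced classifier has error E(a₀,a₀) = min(p0, 1−p0). -/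
noncomputable def L₂ (p0 a b : ℝ) : ℝ :=
  p0 * max (s a) (s b) + (1 - p0) * max (s (-a)) (s (-b)) +
    p0 * s a + (1 - p0) * s (-b)

lemma s_neg (t : ℝ) : s (-t) = s t - t := by
  unfold s
  have h : (1 : ℝ) + Real.exp (-t) = (1 + Real.exp t) / Real.exp t := by
    rw [Real.exp_neg]
    field_simp
    ring
  rw [h, Real.log_div (by positivity) (Real.exp_ne_zero t), Real.log_exp]

lemma s_strictMono : StrictMono s := fun x y h =>
  Real.log_lt_log (by positivity) (by linarith [Real.exp_lt_exp.2 h])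

lemma f_lt (p0 t : ℝ) (hp0 : 0 < p0) (hp1 : p0 < 1)
    (ht : t ≠ Real.log ((1 - p0) / p0)) :
    p0 * s (Real.log ((1 - p0) / p0)) + (1 - p0) * s (-(Real.log ((1 - p0) / p0)))
      < p0 * s t + (1 - p0) * s (-t) := by
  set c := Real.log ((1 - p0) / p0) with hc
  have hec : Real.exp c = (1 - p0) / p0 := Real.exp_log (div_pos (by linarith) hp0)
  have h1 : ∀ x : ℝ, p0 * s x + (1 - p0) * s (-x) = Real.log (1 + Real.exp x) - (1 - p0) * x := by
    intro x; rw [s_neg]; unfold s; ring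
  rw [h1, h1]
  have hu : (0 : ℝ) ≠ t - c := fun h => ht (by linarith)
  have h1p : (0:ℝ) < 1 - p0 := by linarith
  have h1p' : (1:ℝ) - p0 ≠ 0 := ne_of_gt h1p
  have key := strictConvexOn_exp.2 (Set.mem_univ (0:ℝ)) (Set.mem_univ (t - c)) hu hp0
    h1p (by ring)
  simp only [smul_eq_mul, mul_zero, zero_add, Real.exp_zero, mul_one] at key
  have hrw : p0 + (1 - p0) * Real.exp (t - c) = p0 * (1 + Real.exp t) := by
    rw [Real.exp_sub, hec]
    field_simp
  rw [hrw] at key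
  have hlog : (1 - p0) * (t - c) < Real.log (p0 * (1 + Real.exp t)) :=
    (Real.lt_log_iff_exp_lt (by positivity)).2 key
  rw [Real.log_mul (ne_of_gt hp0) (by positivity)] at hlog
  have hca : (1 : ℝ) + Real.exp c = 1 / p0 := by rw [hec]; field_simp; ring
  have : Real.log (1 + Real.exp c) = -Real.log p0 := by rw [hca, one_div, Real.log_inv]
  linarith

theorem L2_unique_min_and_error (p0 : ℝ) (hp0 : 0 < p0) (hp1 : p0 < 1) :
    (∀ a b : ℝ,
      L₂ p0 (Real.log ((1 - p0) / p0)) (Real.log ((1 - p0) / p0)) ≤ L₂ p0 a b) ∧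
    (∀ a b : ℝ, (a, b) ≠ (Real.log ((1 - p0) / p0), Real.log ((1 - p0) / p0)) →
      L₂ p0 (Real.log ((1 - p0) / p0)) (Real.log ((1 - p0) / p0)) < L₂ p0 a b) ∧
    (p0 ≠ 1 / 2 →
      E p0 (Real.log ((1 - p0) / p0)) (Real.log ((1 - p0) / p0)) = min p0 (1 - p0)) := by
  set c := Real.log ((1 - p0) / p0) with hc
  have hLcc : L₂ p0 c c = (p0 * s c + (1 - p0) * s (-c)) + (p0 * s c + (1 - p0) * s (-c)) := by
    unfold L₂; rw [max_self, max_self]; ring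
  have fle : ∀ t : ℝ, p0 * s c + (1 - p0) * s (-c) ≤ p0 * s t + (1 - p0) * s (-t) := by
    intro t
    by_cases h : t = c
    · subst h; exact le_rfl
    · exact le_of_lt (f_lt p0 t hp0 hp1 h)
  have hstrict : ∀ a b : ℝ, (a, b) ≠ (c, c) → L₂ p0 c c < L₂ p0 a b := by
    intro a b hne
    have hne' : a ≠ c ∨ b ≠ c := by
      by_contra h
      push_neg at h
      exact hne (by rw [h.1, h.2])
    rcases le_or_gt b a with hba | hab
    · -- L₂ a b = 2*(p0 s a + (1-p0) s(-b))
      have hmax1 : max (s a) (s b) = s a := max_eq_left (s_strictMono.monotone hba)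
      have hmax2 : max (s (-a)) (s (-b)) = s (-b) :=
        max_eq_right (s_strictMono.monotone (neg_le_neg hba))
      have hL : L₂ p0 a b = (p0 * s a + (1 - p0) * s (-b)) + (p0 * s a + (1 - p0) * s (-b)) := by
        unfold L₂; rw [hmax1, hmax2]; ring
      by_cases hbc : b = c
      · subst hbc
        have hac : a ≠ c := fun h => hne (by rw [h])
        have hba' : c < a := lt_of_le_of_ne hba hac.symm
        have hs : s c < s a := s_strictMono hba'
        rw [hL, hLcc]
        nlinarith
      · have hf := f_lt p0 b hp0 hp1 hbc
        have hs : s b ≤ s a := s_strictMono.monotone hba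
        rw [hL, hLcc]
        nlinarith
    · have hmax1 : max (s a) (s b) = s b := max_eq_right (s_strictMono.monotone hab.le)
      have hmax2 : max (s (-a)) (s (-b)) = s (-a) :=
        max_eq_left (s_strictMono.monotone (neg_le_neg hab.le))
      have hL : L₂ p0 a b = (p0 * s a + (1 - p0) * s (-a)) + (p0 * s b + (1 - p0) * s (-b)) := by
        unfold L₂; rw [hmax1, hmax2]; ring
      rw [hL, hLcc]
      rcases hne' with h | h
      · have := f_lt p0 a hp0 hp1 h
        have := fle b
        linarith
      · have := f_lt p0 b hp0 hp1 h
        have := fle a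
        linarith
  refine ⟨?_, hstrict, ?_⟩
  · intro a b
    by_cases h : (a, b) = (c, c)
    · rw [Prod.mk.injEq] at h
      rw [h.1, h.2]
    · exact le_of_lt (hstrict a b h)
  · intro hhalf
    rcases lt_or_gt_of_ne hhalf with h | h
    · have hcpos : 0 < c := Real.log_pos ((one_lt_div hp0).2 (by linarith))
      unfold E
      rw [if_pos (le_of_lt hcpos), if_neg (by linarith), min_eq_left (by linarith)]
      ring
    · have hcneg : c < 0 := Real.log_neg (div_pos (by linarith) hp0) ((div_lt_one hp0).2 (by linarith))
      unfold E
      rw [if_neg (by linarith), if_pos (le_of_lt hcneg), min_eq_right (by linarith)]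
      ring
end

section
/- Fix p0 ∈ (0,1) and λ ∈ [0,1), and define L_C(a,b) = p0·( ((1+λ)/2)·s(b) + ((1−λ)/2)·s(−b) ) + (1−p0)·( ((1+λ)/2)·s(−a) + ((1−λ)/2)·s(a) ) + p0·s(a) + (1−p0)·s(−b). Then L_C attains its unique global minimum on ℝ² at the point (a*, b*) with a* = log( ((1+λ)/2)·(1−p0) / ( p0 + ((1−λ)/2)·(1−p0) ) ) and b* = log( ( ((1−λ)/2)·p0 + (1−p0) ) / ( ((1+λ)/2)·p0 ) ). -/
noncomputable def LC (p0 lam a b : ℝ) : ℝ :=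
  p0 * (((1 + lam) / 2) * s b + ((1 - lam) / 2) * s (-b)) +
    (1 - p0) * (((1 + lam) / 2) * s (-a) + ((1 - lam) / 2) * s a) +
    p0 * s a + (1 - p0) * s (-b)

lemma softplus_tangent {x y : ℝ} (h : x ≠ y) :
    s y + (Real.exp y / (1 + Real.exp y)) * (x - y) < s x := by
  have hey := Real.exp_pos y
  have hex := Real.exp_pos x
  have h1y : 0 < 1 + Real.exp y := by linarith
  have h1x : 0 < 1 + Real.exp x := by linarith
  set σ := Real.exp y / (1 + Real.exp y) with hσdef
  have hσ0 : 0 < σ := div_pos hey h1y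
  have hσ1 : σ < 1 := (div_lt_one h1y).2 (by linarith)
  have hu : x - y ≠ (0 : ℝ) := sub_ne_zero.2 h
  have hconv := strictConvexOn_exp.2 (Set.mem_univ (x - y)) (Set.mem_univ (0 : ℝ)) hu
    hσ0 (by linarith : (0:ℝ) < 1 - σ) (by ring)
  simp only [smul_eq_mul, mul_zero, add_zero, Real.exp_zero, mul_one] at hconv
  have key : σ * Real.exp (x - y) + (1 - σ) = (1 + Real.exp x) / (1 + Real.exp y) := by
    rw [hσdef, Real.exp_sub]
    field_simp
    ring
  rw [key] at hconv
  have hlog := Real.log_lt_log (Real.exp_pos _) hconv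
  rw [Real.log_exp, Real.log_div (by positivity) (by positivity)] at hlog
  unfold s
  linarith

lemma fmin_lt (α β : ℝ) (hα : 0 < α) (hβ : 0 < β) (x : ℝ)
    (hx : x ≠ Real.log (β / α)) :
    α * s (Real.log (β / α)) + β * s (-Real.log (β / α)) < α * s x + β * s (-x) := by
  set c := Real.log (β / α) with hc
  have hec : Real.exp c = β / α := Real.exp_log (div_pos hβ hα)
  have henc : Real.exp (-c) = α / β := by rw [Real.exp_neg, hec, inv_div]
  have t1 := softplus_tangent (x := x) (y := c) hx
  have t2 := softplus_tangent (x := -x) (y := -c) (fun h => hx (neg_injective h))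
  have hab : 0 < α + β := by linarith
  have s1 : Real.exp c / (1 + Real.exp c) = β / (α + β) := by
    rw [hec]
    have h : (0:ℝ) < 1 + β / α := by positivity
    rw [div_eq_div_iff h.ne' (by positivity)]
    field_simp
  have s2 : Real.exp (-c) / (1 + Real.exp (-c)) = α / (α + β) := by
    rw [henc]
    have h : (0:ℝ) < 1 + α / β := by positivity
    rw [div_eq_div_iff h.ne' (by positivity)]
    field_simp
    ring
  rw [s1] at t1
  rw [s2] at t2
  have hz : α * (β / (α + β) * (x - c)) + β * (α / (α + β) * (-x - -c)) = 0 := by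
    field_simp
    ring
  have m1 := mul_lt_mul_of_pos_left t1 hα
  have m2 := mul_lt_mul_of_pos_left t2 hβ
  nlinarith [m1, m2, hz]

lemma fmin_le (α β : ℝ) (hα : 0 < α) (hβ : 0 < β) (x : ℝ) :
    α * s (Real.log (β / α)) + β * s (-Real.log (β / α)) ≤ α * s x + β * s (-x) := by
  by_cases hx : x = Real.log (β / α)
  · rw [hx]
  · exact le_of_lt (fmin_lt α β hα hβ x hx)

theorem LC_unique_global_min (p0 lam : ℝ) (hp0 : 0 < p0) (hp1 : p0 < 1)
    (hlam0 : 0 ≤ lam) (hlam1 : lam < 1) :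
    (∀ a b : ℝ,
      LC p0 lam
          (Real.log (((1 + lam) / 2) * (1 - p0) / (p0 + ((1 - lam) / 2) * (1 - p0))))
          (Real.log ((((1 - lam) / 2) * p0 + (1 - p0)) / (((1 + lam) / 2) * p0))) ≤
        LC p0 lam a b) ∧
    (∀ a b : ℝ,
      (a, b) ≠
        (Real.log (((1 + lam) / 2) * (1 - p0) / (p0 + ((1 - lam) / 2) * (1 - p0))),
         Real.log ((((1 - lam) / 2) * p0 + (1 - p0)) / (((1 + lam) / 2) * p0))) →
      LC p0 lam
          (Real.log (((1 + lam) / 2) * (1 - p0) / (p0 + ((1 - lam) / 2) * (1 - p0))))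
          (Real.log ((((1 - lam) / 2) * p0 + (1 - p0)) / (((1 + lam) / 2) * p0))) <
        LC p0 lam a b) := by
  set α := p0 + ((1 - lam) / 2) * (1 - p0) with hαdef
  set β := ((1 + lam) / 2) * (1 - p0) with hβdef
  set γ := ((1 + lam) / 2) * p0 with hγdef
  set δ := ((1 - lam) / 2) * p0 + (1 - p0) with hδdef
  have hα : 0 < α := by rw [hαdef]; nlinarith
  have hβ : 0 < β := by rw [hβdef]; nlinarith
  have hγ : 0 < γ := by rw [hγdef]; nlinarith
  have hδ : 0 < δ := by rw [hδdef]; nlinarith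
  have hdecomp : ∀ a b : ℝ, LC p0 lam a b =
      (α * s a + β * s (-a)) + (γ * s b + δ * s (-b)) := by
    intro a b
    rw [hαdef, hβdef, hγdef, hδdef]
    unfold LC
    ring
  have hastar : Real.log (((1 + lam) / 2) * (1 - p0) / (p0 + ((1 - lam) / 2) * (1 - p0)))
      = Real.log (β / α) := by rw [hαdef, hβdef]
  have hbstar : Real.log ((((1 - lam) / 2) * p0 + (1 - p0)) / (((1 + lam) / 2) * p0))
      = Real.log (δ / γ) := by rw [hγdef, hδdef]
  constructor
  · intro a b
    rw [hdecomp, hdecomp, hastar, hbstar]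
    have hna : -Real.log (δ / γ) = -Real.log (δ / γ) := rfl
    exact add_le_add (fmin_le α β hα hβ a) (fmin_le γ δ hγ hδ b)
  · intro a b hne
    rw [hdecomp, hdecomp, hastar, hbstar]
    by_cases ha : a = Real.log (β / α)
    · have hb : b ≠ Real.log (δ / γ) := by
        intro hb
        apply hne
        rw [ha, hb, hastar, hbstar]
      exact add_lt_add_of_le_of_lt (fmin_le α β hα hβ a) (fmin_lt γ δ hγ hδ b hb)
    · exact add_lt_add_of_lt_of_le (fmin_lt α β hα hβ a ha) (fmin_le γ δ hγ hδ b)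
end
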